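/- In a braided monoidal category, a self-dual object has trivial balancing if and only if its coevaluation is invariant under the braiding: if A is self-dual via an exact pairing η : 𝟙 ⟶ A ⊗ A, ε : A ⊗ A ⟶ 𝟙, and b_A denotes the balancing of A, then b_A = 1_A if and only if η ≧ β_{A,A} = η. This is the decategorified form of the paper's claim that one can construct a 2-isomorphism V_A : b_A ⇒ 1_A from a 2-isomorphism W_A : i_A ⇒ i_{A*} R_{A*,A} (the writhing), and conversely. -/

import Mathlib

open CategoryTheory MonoidalCategory

variable {C : Type*} [Category C] [MonoidalCategory C] [BraidedCategory C]

/-- The two zigzag identities saying that `(η, ε)` exhibit `A` as a right dual of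
itself (in Mathlib terms, `ExactPairing A A`). -/
def IsSelfDual (A : C) (η : 𝟙_ C ⟶ A ⊗ A) (ε : A ⊗ A ⟶ 𝟙_ C) : Prop :=
  (η ▷ A ≫ (α_ A A A).hom ≫ A ◁ ε = (λ_ A).hom ≫ (ρ_ A).inv) ∧
  (A ◁ η ≫ (α_ A A A).inv ≫ ε ▷ A = (ρ_ A).hom ≫ (λ_ A).inv)

/-- The balancing `b_A = λ_A⁻¹ ≧ (η ▷ A) ≧ α ≧ (A ◁ β_{A,A}) ≧ α⁻¹ ≧ (ε ▷ A) ≧ λ_A`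
of a self-dual object. -/
def balancing (A : C) (η : 𝟙_ C ⟶ A ⊗ A) (ε : A ⊗ A ⟶ 𝟙_ C) : A ⟶ A :=
  (λ_ A).inv ≫ η ▷ A ≫ (α_ A A A).hom ≫ A ◁ (β_ A A).hom ≫ (α_ A A A).inv ≫
    ε ▷ A ≫ (λ_ A).hom

/-- A self-dual object has trivial balancing iff its coevaluation is invariant under
the braiding: `b_A = 1_A ↔ η ≧ β_{A,A} = η`. -/
theorem balancing_eq_id_iff_coevaluation_braiding_invariant
    (A : C) (η : 𝟙_ C ⟶ A ⊗ A) (ε : A ⊗ A ⟶ 𝟙_ C)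
    (h : IsSelfDual A η ε) :
    balancing A η ε = 𝟙 A ↔ η ≫ (β_ A A).hom = η := by
  obtain ⟨h1, h2⟩ := h
  letI : ExactPairing A A := ⟨η, ε, h2, h1⟩
  -- the partial transpose map is injective
  have hinj : Function.Injective
      (fun g : 𝟙_ C ⟶ A ⊗ A =>
        g ▷ A ≫ (α_ A A A).hom ≫ A ◁ ε ≫ (ρ_ A).hom) := by
    intro g g' hg
    exact (tensorRightHomEquiv (𝟙_ C) A A A).symm.injective hg
  -- slide the braiding from the middle of the balancing over to the coevaluation
  have braid : (β_ A A).hom ▷ A ≫ (α_ A A A).hom ≫ A ◁ (β_ A A).hom ≫ (α_ A A A).inv ≫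
      ε ▷ A ≫ (λ_ A).hom = (α_ A A A).hom ≫ A ◁ ε ≫ (ρ_ A).hom := by
    have step : (β_ A A).hom ▷ A ≫ (α_ A A A).hom ≫ A ◁ (β_ A A).hom ≫ (α_ A A A).inv ≫
        ε ▷ A ≫ (λ_ A).hom =
        (α_ A A A).hom ≫ (β_ A (A ⊗ A)).hom ≫ ε ▷ A ≫ (λ_ A).hom := by
      rw [BraidedCategory.braiding_tensor_right_hom]; simp
    rw [step, ← BraidedCategory.braiding_naturality_right_assoc]
    simp
  have key : balancing A η ε =
      (λ_ A).inv ≫ (η ≫ (β_ A A).inv) ▷ A ≫ (α_ A A A).hom ≫ A ◁ ε ≫ (ρ_ A).hom := by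
    unfold balancing
    rw [← braid]
    simp [comp_whiskerRight]
  have hη : η ▷ A ≫ (α_ A A A).hom ≫ A ◁ ε ≫ (ρ_ A).hom = (λ_ A).hom := by
    rw [reassoc_of% h1]; simp
  constructor
  · intro hb
    rw [key] at hb
    have hb' : (η ≫ (β_ A A).inv) ▷ A ≫ (α_ A A A).hom ≫ A ◁ ε ≫ (ρ_ A).hom =
        (λ_ A).hom := by
      rw [← cancel_epi (λ_ A).inv]
      simpa using hb
    have hgi : η ≫ (β_ A A).inv = η := hinj (hb'.trans hη.symm)
    calc η ≫ (β_ A A).hom = (η ≫ (β_ A A).inv) ≫ (β_ A A).hom := by rw [hgi]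
      _ = η := by simp
  · intro hβ
    have hgi : η ≫ (β_ A A).inv = η := by
      conv_lhs => rw [← hβ]
      simp
    rw [key, hgi]
    rw [hη]
    simp
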